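/- arXiv:0902.0850 — 2 statements merged into one kernel-verified Lean document; each statement's English description precedes it below -/
import Mathlib

section
/- For Boolean complexes z₁ = (a₁, b₁), z₂ = (a₂, b₂) with disjoint certainty and nihil parts (aⱼ ∧ bⱼ = 0), the dot products ⟨z₁, z₂⟩ and ⟨z₂, z₁⟩* become equal after eliminating the common part of certainty and nihil components: the certainty part of ⟨z₂, z₁⟩* equals (certainty part of ⟨z₁, z₂⟩) ∨ d and its nihil part equals (nihil part of ⟨z₁, z₂⟩) ∨ d, where d = a₁b₁ ∨ ¬a₂¬b₂. -/
/-- For complexes with disjoint certainty and nihil parts, ⟨z₂, z₁⟩* equals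
    ⟨z₁, z₂⟩ up to joining the common part d = a₁b₁ ∨ ¬a₂¬b₂. -/
theorem dot_product_conj_symm {α : Type*} [BooleanAlgebra α]
    (a₁ b₁ a₂ b₂ : α) (h₁ : a₁ ⊓ b₁ = ⊥) (h₂ : a₂ ⊓ b₂ = ⊥) :
    ((a₂ ⊓ a₁ᶜ ⊔ b₂ ⊓ b₁ᶜ)ᶜ =
        (a₁ ⊓ b₂ᶜ ⊔ b₁ ⊓ a₂ᶜ) ⊔ (a₁ ⊓ b₁ ⊔ a₂ᶜ ⊓ b₂ᶜ)) ∧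
    ((a₂ ⊓ b₁ᶜ ⊔ b₂ ⊓ a₁ᶜ)ᶜ =
        (a₁ ⊓ a₂ᶜ ⊔ b₁ ⊓ b₂ᶜ) ⊔ (a₁ ⊓ b₁ ⊔ a₂ᶜ ⊓ b₂ᶜ)) := by
  constructor
  · rw [compl_sup, compl_inf, compl_inf, compl_compl, compl_compl,
      inf_sup_right, inf_sup_left, inf_sup_left, inf_comm a₂ᶜ b₁]
    simp only [sup_comm, sup_left_comm, sup_assoc]
  · rw [compl_sup, compl_inf, compl_inf, compl_compl, compl_compl,
      inf_sup_right, inf_sup_left, inf_sup_left, inf_comm a₂ᶜ a₁, inf_comm b₁ a₁]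
    simp only [sup_comm, sup_left_comm, sup_assoc]
end

section
/- Let p be an MGG production with erasing matrix e and addition matrix r satisfying e ∧ r = 0, r ∧ L = 0, e ≤ L, and nihilation matrix K with K = r ∨ (¬e ∧ D̄) where e ∧ D̄ relations hold (r ∧ D̄ = r, ¬r ∧ L = L). Define P(p) = (¬e ∧ ¬r, e ∨ r). Then ⟨(L, K), P(p)⟩ = (r ∨ (¬e ∧ L), e ∨ (¬r ∧ K)), i.e. the dot product with P(p) computes the right-hand side R = p(L) and its nihilation matrix Q = p⁻¹(K). -/
/-- The dot product with the self-adjoint operator image P(p) = (¬e∧¬r, e∨r)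
    computes the production: ⟨(L,K), P(p)⟩ = (r ∨ ¬e∧L, e ∨ ¬r∧K). -/
theorem production_via_dot_product {α : Type*} [BooleanAlgebra α]
    (L K e r D : α)
    (her : e ⊓ r = ⊥) (hrL : r ⊓ L = ⊥) (heL : e ≤ L)
    (hK : K = r ⊔ (eᶜ ⊓ D)) (hrD : r ⊓ D = r) (hLK : L ⊓ K = ⊥) :
    ((L ⊓ (eᶜ ⊓ rᶜ) ⊔ K ⊓ (e ⊔ r),
      L ⊓ (e ⊔ r) ⊔ K ⊓ (eᶜ ⊓ rᶜ)) : α × α) =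
      (r ⊔ eᶜ ⊓ L, e ⊔ rᶜ ⊓ K) := by
  subst hK
  have hdis : Disjoint r L := disjoint_iff.mpr hrL
  have hLr : L ⊓ rᶜ = L := inf_eq_left.mpr hdis.symm.le_compl_right
  have hLe : L ⊓ e = e := inf_eq_right.mpr heL
  have hre : r ⊓ e = ⊥ := by rw [inf_comm]; exact her
  have hKer : (r ⊔ eᶜ ⊓ D) ⊓ (e ⊔ r) = r := by
    rw [inf_sup_right, inf_sup_left, inf_sup_left, hre,
      inf_right_comm eᶜ D e, inf_comm eᶜ e, inf_compl_eq_bot, bot_inf_eq,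
      inf_assoc eᶜ D r, inf_comm D r, hrD]
    simp
  have hKc : (r ⊔ eᶜ ⊓ D) ⊓ (eᶜ ⊓ rᶜ) = rᶜ ⊓ (r ⊔ eᶜ ⊓ D) := by
    rw [inf_sup_right, inf_sup_left, compl_inf_eq_bot,
      inf_left_comm r eᶜ, inf_compl_eq_bot, inf_bot_eq]
    have : eᶜ ⊓ D ⊓ (eᶜ ⊓ rᶜ) = rᶜ ⊓ (eᶜ ⊓ D) := by
      simp [inf_comm, inf_left_comm, inf_assoc, inf_left_idem]
    rw [this]
  have hfst : L ⊓ (eᶜ ⊓ rᶜ) = eᶜ ⊓ L := by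
    rw [inf_comm eᶜ rᶜ, ← inf_assoc, hLr, inf_comm]
  have hLe' : L ⊓ (e ⊔ r) = e := by
    rw [inf_sup_left, hLe, (inf_comm L r ▸ hrL : L ⊓ r = ⊥), sup_bot_eq]
  exact Prod.ext (by rw [hKer, hfst, sup_comm]) (by rw [hKc, hLe'])
end
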